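/- arXiv:2507.18976 — 4 statements merged into one kernel-verified Lean document; each statement's English description precedes it below -/
import Mathlib

section
/- Suppose the 3×3 normal matrix M with rows (∑_{i=1}^n w_i, ∑_{i=1}^n w_i x_i, ∑_{i=1}^n w_i y_i), (∑_{i=1}^n w_i x_i, ∑_{i=1}^n w_i x_i², ∑_{i=1}^n w_i x_i y_i), (∑_{i=1}^n w_i y_i, ∑_{i=1}^n w_i x_i y_i, ∑_{i=1}^n w_i y_i²) is invertible, and let (a0,a1,a2) be the unique solution of M·(a0,a1,a2)ᵀ = (∑_{i=1}^n w_i z_i, ∑_{i=1}^n w_i z_i x_i, ∑_{i=1}^n w_i z_i y_i)ᵀ. Then ∑_{j=1}^n w_j μ_j = det M ≠ 0 and a0 = (∑_{i=1}^n w_i μ_i z_i) / (∑_{j=1}^n w_j μ_j), i.e. a0 = ∑_{i=1}^n α_i z_i with α_i = w_i μ_i / ∑_{j=1}^n w_j μ_j. -/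
open Finset

private lemma sum_lin {n : ℕ} (A B C : ℝ) (x y u : Fin n → ℝ) :
    ∑ j, u j * (A + B * x j + C * y j)
      = A * (∑ j, u j) + B * (∑ j, u j * x j) + C * (∑ j, u j * y j) := by
  rw [Finset.mul_sum Finset.univ u A, Finset.mul_sum Finset.univ (fun j => u j * x j) B,
    Finset.mul_sum Finset.univ (fun j => u j * y j) C, ← Finset.sum_add_distrib,
    ← Finset.sum_add_distrib]
  exact Finset.sum_congr rfl fun j _ => by ring
/-- The determinant `μ_j` from the weighted least squares subdivision rule. -/
noncomputable def mu (n : ℕ) (w x y : Fin n → ℝ) (j : Fin n) : ℝ :=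
  (!![1,   ∑ i, w i * x i,       ∑ i, w i * y i;
      x j, ∑ i, w i * x i ^ 2,   ∑ i, w i * x i * y i;
      y j, ∑ i, w i * x i * y i, ∑ i, w i * y i ^ 2]).det

/-- If the normal matrix `M` is invertible and `(a0,a1,a2)` solves the normal
equations, then `∑ⱼ wⱼ μⱼ = det M ≠ 0` and `a0 = (∑ᵢ wᵢ μᵢ zᵢ) / (∑ⱼ wⱼ μⱼ)`, i.e.
`a0 = ∑ᵢ αᵢ zᵢ` with `αᵢ = wᵢ μᵢ / ∑ⱼ wⱼ μⱼ`. -/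
theorem wls_a0_formula
    (n : ℕ) (x y z w : Fin n → ℝ) (hw : ∀ i, 0 < w i)
    (M : Matrix (Fin 3) (Fin 3) ℝ)
    (hM : M = !![∑ i, w i,       ∑ i, w i * x i,       ∑ i, w i * y i;
                 ∑ i, w i * x i, ∑ i, w i * x i ^ 2,   ∑ i, w i * x i * y i;
                 ∑ i, w i * y i, ∑ i, w i * x i * y i, ∑ i, w i * y i ^ 2])
    (hMunit : IsUnit M.det)
    (a : Fin 3 → ℝ)
    (ha : M.mulVec a = ![∑ i, w i * z i, ∑ i, w i * z i * x i, ∑ i, w i * z i * y i]) :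
    (∑ j, w j * mu n w x y j) = M.det ∧ M.det ≠ 0 ∧
      a 0 = (∑ i, w i * mu n w x y i * z i) / (∑ j, w j * mu n w x y j) ∧
      a 0 = ∑ i, (w i * mu n w x y i / ∑ j, w j * mu n w x y j) * z i := by
  have hdet : M.det ≠ 0 := by
    intro h; rw [h] at hMunit; simp at hMunit
  set A : ℝ := (∑ i, w i * x i ^ 2) * (∑ i, w i * y i ^ 2)
      - (∑ i, w i * x i * y i) * (∑ i, w i * x i * y i) with hA
  set B : ℝ := (∑ i, w i * y i) * (∑ i, w i * x i * y i)
      - (∑ i, w i * x i) * (∑ i, w i * y i ^ 2) with hB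
  set C : ℝ := (∑ i, w i * x i) * (∑ i, w i * x i * y i)
      - (∑ i, w i * y i) * (∑ i, w i * x i ^ 2) with hC
  have hmu : ∀ j, mu n w x y j = A + B * x j + C * y j := by
    intro j
    rw [hA, hB, hC]
    simp [mu, Matrix.det_fin_three]
    ring
  have hsum : (∑ j, w j * mu n w x y j) = M.det := by
    calc ∑ j, w j * mu n w x y j = ∑ j, w j * (A + B * x j + C * y j) := by
          exact Finset.sum_congr rfl fun j _ => by rw [hmu j]
      _ = A * (∑ j, w j) + B * (∑ j, w j * x j) + C * (∑ j, w j * y j) := sum_lin A B C x y w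
      _ = M.det := by
          rw [hM, Matrix.det_fin_three, hA, hB, hC]
          simp
          ring
  have hnum : (∑ i, w i * mu n w x y i * z i)
      = A * (∑ i, w i * z i) + B * (∑ i, w i * z i * x i) + C * (∑ i, w i * z i * y i) := by
    calc ∑ i, w i * mu n w x y i * z i = ∑ i, (w i * z i) * (A + B * x i + C * y i) := by
          exact Finset.sum_congr rfl fun i _ => by rw [hmu i]; ring
      _ = A * (∑ i, w i * z i) + B * (∑ i, w i * z i * x i) + C * (∑ i, w i * z i * y i) := by
          have := sum_lin A B C x y (fun i => w i * z i)
          simpa [mul_assoc] using this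
  have e0 := congrFun ha 0
  have e1 := congrFun ha 1
  have e2 := congrFun ha 2
  rw [hM] at e0 e1 e2
  simp [Matrix.mulVec, dotProduct, Fin.sum_univ_three] at e0 e1 e2
  have key : M.det * a 0 = ∑ i, w i * mu n w x y i * z i := by
    rw [hnum, ← hsum]
    calc (∑ j, w j * mu n w x y j) * a 0
        = (A * (∑ j, w j) + B * (∑ j, w j * x j) + C * (∑ j, w j * y j)) * a 0 := by
          rw [Finset.sum_congr rfl fun j _ => by rw [hmu j], sum_lin A B C x y w]
      _ = A * (∑ i, w i * z i) + B * (∑ i, w i * z i * x i) + C * (∑ i, w i * z i * y i) := by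
          rw [hA, hB, hC]
          linear_combination
            (((∑ i, w i * x i ^ 2) * (∑ i, w i * y i ^ 2)
              - (∑ i, w i * x i * y i) * (∑ i, w i * x i * y i))) * e0
            + (((∑ i, w i * y i) * (∑ i, w i * x i * y i)
              - (∑ i, w i * x i) * (∑ i, w i * y i ^ 2))) * e1
            + (((∑ i, w i * x i) * (∑ i, w i * x i * y i)
              - (∑ i, w i * y i) * (∑ i, w i * x i ^ 2))) * e2
  have ha0 : a 0 = (∑ i, w i * mu n w x y i * z i) / (∑ j, w j * mu n w x y j) := by
    rw [hsum, eq_div_iff hdet, mul_comm]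
    exact key
  refine ⟨hsum, hdet, ha0, ?_⟩
  rw [ha0, Finset.sum_div]
  exact Finset.sum_congr rfl fun i _ => by rw [div_mul_eq_mul_div]
end

section
/- For every j ∈ {1,…,n}, the determinant μ_j satisfies the identity μ_j = ∑_{1 ≤ i < ℓ ≤ n} w_i w_ℓ · det[v_i | v_ℓ] · det[(1,1,1) above (v_j | v_i | v_ℓ)], where det[v_i | v_ℓ] denotes the determinant of the 2×2 matrix with columns v_i and v_ℓ, and det[(1,1,1) above (v_j | v_i | v_ℓ)] denotes the determinant of the 3×3 matrix whose first row is (1,1,1) and whose remaining two rows are formed by the columns v_j, v_i, v_ℓ. -/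
/-!
The rows of the transpose of the matrix defining `μ_j` are `(1, x_j, y_j)`,
`∑ i, w_i x_i (1, x_i, y_i)` and `∑ l, w_l y_l (1, x_l, y_l)`. Expanding the determinant
trilinearly gives `∑ i, ∑ l, w_i x_i w_l y_l D(j, i, l)`, where `D(j, i, l)` is the determinant
with rows `(1, x_j, y_j)`, `(1, x_i, y_i)`, `(1, x_l, y_l)`. Since `D` is alternating, the diagonal terms vanish, and pairing `(i, l)` with
`(l, i)` collects the coefficient `w_i w_l (x_i y_l - x_l y_i)` in front of `D(j, i, l)`.
-/

open Finset

theorem Finset.sum_sum_eq_sum_sum_Ioi_add_swap {α M : Type*} [Fintype α] [LinearOrder α]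
    [LocallyFiniteOrderTop α] [LocallyFiniteOrderBot α] [AddCommMonoid M] {f : α → α → M}
    (hf : ∀ i, f i i = 0) :
    ∑ i, ∑ j, f i j = ∑ i, ∑ j ∈ Ioi i, (f i j + f j i) := by
  calc ∑ i, ∑ j, f i j = ∑ i, ∑ j ∈ {i}ᶜ, f j i := by
        rw [sum_comm]
        refine sum_congr rfl fun i _ => ?_
        rw [← sum_compl_add_sum {i}, sum_singleton, hf, add_zero]
    _ = ∑ i, ∑ j ∈ Ioi i, (f i j + f j i) := by
        rw [← sum_sum_Ioi_add_eq_sum_sum_off_diag]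
        exact sum_congr rfl fun i _ => sum_congr rfl fun j _ => add_comm _ _

theorem Matrix.det_vecCons_sum_smul_sum_smul {R ι : Type*} [CommRing R] [Fintype ι]
    (c : Fin 3 → R) (a : ι → Fin 3 → R) (u v : ι → R) :
    det ![c, ∑ i, u i • a i, ∑ l, v l • a l] = ∑ i, ∑ l, u i * v l * det ![c, a i, a l] := by
  simp only [← triple_product_eq_det, map_sum, map_smul, LinearMap.sum_apply,
    LinearMap.smul_apply, dotProduct_sum, dotProduct_smul, smul_eq_mul, mul_sum]
  rw [sum_comm]
  exact sum_congr rfl fun i _ => sum_congr rfl fun l _ => by ring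

theorem mu_eq_det_sum_smul (n : ℕ) (w x y : Fin n → ℝ) (j : Fin n) :
    mu n w x y j = Matrix.det ![![1, x j, y j], ∑ i, (w i * x i) • ![1, x i, y i],
      ∑ l, (w l * y l) • ![1, x l, y l]] := by
  rw [mu, ← Matrix.det_transpose]
  congr 1
  ext r k
  fin_cases r <;> fin_cases k <;>
    simp only [Fin.zero_eta, Fin.isValue, Fin.mk_one, Fin.reduceFinMk, Matrix.transpose_apply,
      Matrix.of_apply, Matrix.cons_val', Matrix.cons_val_zero, Matrix.cons_val_one,
      Matrix.cons_val, Matrix.cons_val_fin_one, Matrix.smul_cons, smul_eq_mul, mul_one,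
      Matrix.smul_empty, Finset.sum_apply] <;>
    exact sum_congr rfl fun i _ => by ring

theorem mu_eq_sum_pairs_general
    (n : ℕ) (x y w : Fin n → ℝ) (j : Fin n) :
    mu n w x y j =
      ∑ i, ∑ l ∈ Finset.Ioi i,
        w i * w l * (!![x i, x l; y i, y l]).det *
          (!![1, 1, 1; x j, x i, x l; y j, y i, y l]).det := by
  rw [mu_eq_det_sum_smul, Matrix.det_vecCons_sum_smul_sum_smul, sum_sum_eq_sum_sum_Ioi_add_swap]
  · refine sum_congr rfl fun i _ => sum_congr rfl fun l _ => ?_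
    simp only [← triple_product_eq_det, cross_apply, Matrix.vec3_dotProduct,
      Matrix.det_fin_three, Matrix.det_fin_two_of, Matrix.of_apply, Matrix.cons_val',
      Matrix.cons_val_zero, Matrix.cons_val_one, Matrix.cons_val, Matrix.cons_val_fin_one]
    ring
  · intro i
    rw [← triple_product_eq_det, cross_self, dotProduct_zero, mul_zero]

/-- the geometric expansion
`μ_j = ∑_{i < ℓ} w_i w_ℓ · det[v_i | v_ℓ] · det[(1,1,1); (v_j | v_i | v_ℓ)]`. -/
theorem mu_eq_sum_pairs
    (n : ℕ) (x y w : Fin n → ℝ) (hw : ∀ i, 0 < w i) (j : Fin n) :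
    mu n w x y j =
      ∑ i, ∑ l ∈ Finset.Ioi i,
        w i * w l * (!![x i, x l; y i, y l]).det *
          (!![1, 1, 1; x j, x i, x l; y j, y i, y l]).det :=
  mu_eq_sum_pairs_general n x y w j
end

section
/- Let k ≥ 0 and ℓ ∈ ℤ². Then the stencil B^{k+1,ℓ} is a finite set and ∑_{i ∈ B^{k+1,ℓ}} w^{k+1,ℓ}_i (v^k_i − v^{k+1}_ℓ) = 0 ∈ ℝ². -/
/-- The lattice vertex `v^k_i = 2^{-k} E i` of the uniform grid. -/
noncomputable def vert (E : Matrix (Fin 2) (Fin 2) ℝ) (k : ℕ) (i : Fin 2 → ℤ) :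
    EuclideanSpace ℝ (Fin 2) :=
  (WithLp.equiv 2 (Fin 2 → ℝ)).symm ((2:ℝ) ^ (-(k:ℤ)) • E.mulVec (fun s => (i s : ℝ)))

/-- The stencil `B^{k+1,ℓ} = { i ∈ ℤ² : ‖v^{k+1}_ℓ − v^k_i‖ < 2^{-k} L }`. -/
noncomputable def stencil (E : Matrix (Fin 2) (Fin 2) ℝ) (L : ℝ) (k : ℕ) (l : Fin 2 → ℤ) :
    Set (Fin 2 → ℤ) :=
  { i | ‖vert E (k+1) l - vert E k i‖ < (2:ℝ) ^ (-(k:ℤ)) * L }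

/-- The weight `w^{k+1,ℓ}_i = W(‖v^{k+1}_ℓ − v^k_i‖ / (2^{-k} L))`. -/
noncomputable def weight (E : Matrix (Fin 2) (Fin 2) ℝ) (L : ℝ) (W : ℝ → ℝ)
    (k : ℕ) (l i : Fin 2 → ℤ) : ℝ :=
  W (‖vert E (k+1) l - vert E k i‖ / ((2:ℝ) ^ (-(k:ℤ)) * L))

lemma abs_apply_le_norm (x : EuclideanSpace ℝ (Fin 2)) (s : Fin 2) : |x s| ≤ ‖x‖ := by
  rw [EuclideanSpace.norm_eq]
  have h1 : ‖x s‖ ^ 2 ≤ ∑ i, ‖x i‖ ^ 2 :=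
    Finset.single_le_sum (f := fun i => ‖x i‖ ^ 2) (fun i _ => by positivity) (Finset.mem_univ s)
  calc |x s| = Real.sqrt (‖x s‖ ^ 2) := by
        rw [Real.sqrt_sq (norm_nonneg _)]; simp [Real.norm_eq_abs]
    _ ≤ _ := Real.sqrt_le_sqrt h1

/-- Key symmetry: `v^k_i + v^k_{ℓ-i} = 2 v^{k+1}_ℓ`. -/
lemma vert_add_vert_reflect (E : Matrix (Fin 2) (Fin 2) ℝ) (k : ℕ) (l i : Fin 2 → ℤ) :
    vert E k i + vert E k (l - i) = (2 : ℝ) • vert E (k+1) l := by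
  unfold vert
  have h1 : (fun s => ((l - i) s : ℝ)) = (fun s => (l s : ℝ)) - (fun s => (i s : ℝ)) := by
    funext s; simp
  simp only [h1]
  have h2 : (WithLp.equiv 2 (Fin 2 → ℝ)).symm
      = (WithLp.linearEquiv 2 ℝ (Fin 2 → ℝ)).symm.toEquiv := rfl
  rw [h2]
  simp only [LinearEquiv.coe_toEquiv, ← map_add, ← map_smul]
  congr 1
  rw [Matrix.mulVec_sub, smul_sub, smul_smul]
  push_cast
  rw [zpow_neg, zpow_neg, zpow_add₀ (by norm_num : (2:ℝ) ≠ 0)]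
  field_simp
  module

/-- on a uniform grid the stencil `B^{k+1,ℓ}` is finite and the weighted sum of
the vectors from the refined vertex to the stencil vertices vanishes:
`∑_{i ∈ B^{k+1,ℓ}} w^{k+1,ℓ}_i (v^k_i − v^{k+1}_ℓ) = 0`. -/
theorem weighted_sum_of_stencil_vectors_eq_zero
    (E : Matrix (Fin 2) (Fin 2) ℝ) (hE : IsUnit E.det) (L : ℝ) (hL : 0 < L)
    (W : ℝ → ℝ) (hW : ∀ t, 0 ≤ t → t < 1 → 0 < W t ∧ W t ≤ 1)
    (k : ℕ) (l : Fin 2 → ℤ) :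
    (stencil E L k l).Finite ∧
      ∑ᶠ i ∈ stencil E L k l, weight E L W k l i • (vert E k i - vert E (k+1) l) =
        (0 : EuclideanSpace ℝ (Fin 2)) := by
  set v := vert E (k+1) l with hv
  -- reflection facts
  have hrefl : ∀ a : Fin 2 → ℤ, vert E k (l - a) = v + v - vert E k a := by
    intro a
    have h := vert_add_vert_reflect E k l a
    rw [two_smul] at h
    exact eq_sub_of_add_eq' h
  have hnorm : ∀ a : Fin 2 → ℤ, ‖v - vert E k (l - a)‖ = ‖v - vert E k a‖ := by
    intro a
    rw [hrefl a, show v - (v + v - vert E k a) = -(v - vert E k a) by abel, norm_neg]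
  -- Finiteness
  have hfin : (stencil E L k l).Finite := by
    set C : ℝ := ‖v‖ + (2:ℝ) ^ (-(k:ℤ)) * L with hC
    have hCpos : 0 < C := by positivity
    set f : (Fin 2 → ℝ) →L[ℝ] (Fin 2 → ℝ) :=
      LinearMap.toContinuousLinearMap (Matrix.mulVecLin E⁻¹) with hf
    set M : ℝ := ‖f‖ * ((2:ℝ) ^ (k:ℤ) * C) with hM
    have hsub : stencil E L k l ⊆ Set.pi Set.univ (fun _ : Fin 2 => Set.Icc (-⌈M⌉) ⌈M⌉) := by
      intro i hi
      have hiC : ‖vert E k i‖ ≤ C := by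
        have h1 : ‖vert E k i‖ ≤ ‖vert E k i - v‖ + ‖v‖ := by
          simpa using norm_add_le (vert E k i - v) v
        have h2 : ‖vert E k i - v‖ < (2:ℝ) ^ (-(k:ℤ)) * L := by
          rw [← norm_neg, neg_sub]; exact hi
        linarith
      -- coordinatewise bound on E.mulVec
      set ic : Fin 2 → ℝ := fun s => (i s : ℝ) with hic
      have hcoord : ∀ s, |(E.mulVec ic) s| ≤ (2:ℝ) ^ (k:ℤ) * C := by
        intro s
        have h3 : |(vert E k i) s| ≤ C := (abs_apply_le_norm _ s).trans hiC
        have h4 : (vert E k i) s = (2:ℝ) ^ (-(k:ℤ)) * (E.mulVec ic) s := rfl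
        rw [h4, abs_mul, abs_of_pos (by positivity : (0:ℝ) < (2:ℝ) ^ (-(k:ℤ)))] at h3
        have h5 : (0:ℝ) < (2:ℝ) ^ (-(k:ℤ)) := by positivity
        rw [show ((2:ℝ) ^ (k:ℤ) * C) = C / (2:ℝ) ^ (-(k:ℤ)) by
          rw [zpow_neg]; field_simp]
        rw [le_div_iff₀ h5, mul_comm]
        exact h3
      have hpi : ‖E.mulVec ic‖ ≤ (2:ℝ) ^ (k:ℤ) * C := by
        rw [pi_norm_le_iff_of_nonneg (by positivity)]
        intro s; simpa [Real.norm_eq_abs] using hcoord s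
      have hinv : f (E.mulVec ic) = ic := by
        simp only [hf, LinearMap.coe_toContinuousLinearMap', Matrix.mulVecLin_apply,
          Matrix.mulVec_mulVec, Matrix.nonsing_inv_mul E hE, Matrix.one_mulVec]
      have hicM : ‖ic‖ ≤ M := by
        rw [← hinv]
        calc ‖f (E.mulVec ic)‖ ≤ ‖f‖ * ‖E.mulVec ic‖ := f.le_opNorm _
          _ ≤ M := by
            rw [hM]
            exact mul_le_mul_of_nonneg_left hpi (norm_nonneg f)
      intro s _
      have h6 : |ic s| ≤ M := by
        have := norm_le_pi_norm ic s
        rw [Real.norm_eq_abs] at this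
        exact this.trans hicM
      have h7 : |(i s : ℝ)| ≤ (⌈M⌉ : ℝ) := h6.trans (Int.le_ceil M)
      rw [abs_le] at h7
      constructor
      · exact_mod_cast h7.1
      · exact_mod_cast h7.2
    exact Set.Finite.subset (Set.Finite.pi fun _ => Set.finite_Icc _ _) hsub
  refine ⟨hfin, ?_⟩
  -- the weighted sum vanishes by the involution i ↦ l - i
  set F : (Fin 2 → ℤ) → EuclideanSpace ℝ (Fin 2) :=
    fun i => weight E L W k l i • (vert E k i - v) with hF
  have hcoe : stencil E L k l = (hfin.toFinset : Set (Fin 2 → ℤ)) := hfin.coe_toFinset.symm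
  rw [hcoe, finsum_mem_coe_finset]
  refine Finset.sum_involution (fun a _ => l - a) ?_ ?_ ?_ ?_
  · intro a ha
    have hw : weight E L W k l (l - a) = weight E L W k l a := by
      unfold weight
      rw [hnorm a]
    have hd : vert E k (l - a) - v = -(vert E k a - v) := by
      rw [hrefl a]; abel
    show F a + F (l - a) = 0
    rw [hF]
    simp only
    rw [hw, hd, smul_neg, add_neg_cancel]
  · intro a ha hne
    intro heq
    have heq' : l - a = a := heq
    apply hne
    have hva : vert E k a = v := by
      have := hrefl a
      rw [heq'] at this
      have h8 : vert E k a + vert E k a = v + v := eq_sub_iff_add_eq.mp this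
      have h9 : (2:ℝ) • vert E k a = (2:ℝ) • v := by
        rw [two_smul, two_smul]; exact h8
      exact smul_right_injective _ (by norm_num : (2:ℝ) ≠ 0) h9
    show F a = 0
    rw [hF]
    simp only
    rw [hva, sub_self, smul_zero]
  · intro a ha
    rw [Set.Finite.mem_toFinset] at ha ⊢
    show ‖v - vert E k (l - a)‖ < _
    rw [hnorm a]
    exact ha
  · intro a ha
    simp
end

section
/- Take n = 7, the points v_1 = (0,0), v_2 = (−4,1), v_3 = (−3,1), v_4 = (−2,1), v_5 = (−1,1), v_6 = (4,1), v_7 = (3,−1), all weights w_i = 1, and the evaluation point at the origin. Then μ_j = 249 − 18 x_j − 193 y_j for each j; in particular μ_6 = −16 < 0 while ∑_{j=1}^7 μ_j = 1025 > 0, so the coefficient α_6 = μ_6 / ∑_{j=1}^7 μ_j is strictly negative. Hence, in general non-uniform grid configurations, the coefficients of the weighted least squares subdivision rule can be negative. -/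
open Finset

/-- the explicit counterexample with the seven points
`(0,0), (−4,1), (−3,1), (−2,1), (−1,1), (4,1), (3,−1)`, unit weights and evaluation at the
origin: `μ_j = 249 − 18 x_j − 193 y_j`, `μ_6 = −16 < 0`, `∑ μ_j = 1025 > 0`, and the
coefficient `α_6 = μ_6 / (∑ μ_j)` is strictly negative. -/

private lemma vec7_five (a b c d e f g : ℝ) : ![a,b,c,d,e,f,g] 5 = f := rfl
private lemma vec7_six (a b c d e f g : ℝ) : ![a,b,c,d,e,f,g] 6 = g := rfl
private lemma vec7_head0 : Matrix.vecHead (Matrix.vecTail fun _ : Fin 7 => (0:ℝ)) = 0 := rfl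

/-- the explicit counterexample with the seven points
`(0,0), (−4,1), (−3,1), (−2,1), (−1,1), (4,1), (3,−1)`, unit weights and evaluation at the
origin: `μ_j = 249 − 18 x_j − 193 y_j`, `μ_6 = −16 < 0`, `∑ μ_j = 1025 > 0`, and the
coefficient `α_6 = μ_6 / ∑ μ_j` is strictly negative. -/
theorem negative_coefficient_example :
    let x : Fin 7 → ℝ := ![0, -4, -3, -2, -1, 4, 3]
    let y : Fin 7 → ℝ := ![0, 1, 1, 1, 1, 1, -1]
    let w : Fin 7 → ℝ := fun _ => 1
    (∀ j, mu 7 w x y j = 249 - 18 * x j - 193 * y j) ∧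
      mu 7 w x y 5 = -16 ∧ mu 7 w x y 5 < 0 ∧
      (∑ j, mu 7 w x y j) = 1025 ∧ 0 < ∑ j, mu 7 w x y j ∧
      mu 7 w x y 5 / (∑ j, mu 7 w x y j) < 0 := by
  intro x y w
  have hkey : ∀ j, mu 7 w x y j = 249 - 18 * x j - 193 * y j := by
    intro j
    fin_cases j <;>
      simp [mu, Matrix.det_fin_three, Fin.sum_univ_seven, Matrix.cons_val_succ, vec7_five, vec7_six, Matrix.vecHead, Matrix.vecTail, x, y, w] <;> norm_num
  have h5 : mu 7 w x y 5 = -16 := by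
    rw [hkey]; simp [x, y, vec7_five]; norm_num
  have hsum : (∑ j, mu 7 w x y j) = 1025 := by
    simp only [Fin.sum_univ_seven, hkey]
    simp [x, y, vec7_five, vec7_six]; norm_num
  refine ⟨hkey, h5, by rw [h5]; norm_num, hsum, by rw [hsum]; norm_num, ?_⟩
  rw [h5, hsum]; norm_num
end
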